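/- Let 0<s<1 and 2≤p<∞ be fixed and let Ω⊂ℝⁿ be an open set. Then for every u∈C²(Ω)∩L^∞(Ω) and every x∈Ω, the principal value lim_{ε↓0} ∫_{Ω\B_ε(x)} |u(x)-u(y)|^{p-2}(u(x)-u(y))/|x-y|^{n+sp} dy exists and is finite; that is, the regional (s,p)-Laplacian (-Δ_{p,Ω})^s u(x) is well defined at every point of Ω. -/

import Mathlib

/-!
Far from `x` the integrand is bounded by `(2M)^(p-1) |x - y|^(-n-sp)`, which is integrable
outside every ball since `n + sp > n`. Near `x` the reflection `y ↦ 2x - y` preserves the annuli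
`B_r(x) \ B_ε(x)`, so the integral over them is half the integral of the symmetrized kernel. For
`p ≥ 2` the map `J_p(t) = |t|^(p-2) t` is locally Lipschitz with constant `(p-1) M^(p-2)`, and
`u ∈ C²` makes `u(x+h) - u(x)` of order `|h|` and the second difference of order `|h|²`; hence
`J_p(u(x) - u(x+h)) + J_p(u(x) - u(x-h)) = O(|h|^p)` and the symmetrized kernel is
`O(|h|^((1-s)p - n))`, integrable near `x`. Dominated convergence then gives the limit.
-/

open MeasureTheory Filter Topology Set

noncomputable section

abbrev Euc (n : ℕ) := EuclideanSpace ℝ (Fin n)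

open Metric
open scoped NNReal

/-- `J_p(t) = |t|^{p-2} t`, the nonlinearity of the `p`-Laplacian. -/
def jp (p t : ℝ) : ℝ := |t| ^ (p - 2) * t

theorem hasDerivAt_jp {p : ℝ} (hp : 2 ≤ p) (t : ℝ) :
    HasDerivAt (jp p) ((p - 1) * |t| ^ (p - 2)) t := by
  rcases eq_or_ne t 0 with rfl | ht
  · rw [hasDerivAt_iff_tendsto_slope_zero]
    have hcont := ((Real.continuous_rpow_const (sub_nonneg.2 hp)).comp continuous_abs).tendsto 0
    -- for `p = 2` both sides are `0 ^ 0 = 1`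
    have hval : (p - 1) * |(0 : ℝ)| ^ (p - 2) = |(0 : ℝ)| ^ (p - 2) := by
      rcases hp.eq_or_lt with rfl | hp
      · norm_num
      · simp [Real.zero_rpow (sub_pos.2 hp).ne']
    rw [hval]
    refine (hcont.mono_left nhdsWithin_le_nhds).congr' (eventually_nhdsWithin_of_forall ?_)
    intro s hs
    show |s| ^ (p - 2) = s⁻¹ • (jp p (0 + s) - jp p 0)
    simp only [jp, zero_add, mul_zero, sub_zero, smul_eq_mul]
    rw [mul_comm (|s| ^ (p - 2)) s, inv_mul_cancel_left₀ hs]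
  · have h := ((hasDerivAt_abs ht).rpow_const (p := p - 2) (Or.inl (abs_ne_zero.2 ht))).mul
      (hasDerivAt_id t)
    have habs : |t| ≠ 0 := abs_ne_zero.2 ht
    refine h.congr_deriv ?_
    rw [Real.rpow_sub_one habs, id]
    calc _ = (p - 2) * (|t| ^ (p - 2) / |t|) * (SignType.sign t * t) + |t| ^ (p - 2) := by ring
      _ = _ := by rw [sign_mul_self, mul_assoc, div_mul_cancel₀ _ habs]; ring

theorem continuous_jp {p : ℝ} (hp : 2 ≤ p) : Continuous (jp p) :=
  continuous_iff_continuousAt.2 fun t => (hasDerivAt_jp hp t).continuousAt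

theorem jp_neg (p t : ℝ) : jp p (-t) = -jp p t := by
  simp [jp]

theorem abs_jp {p : ℝ} (hp : p ≠ 1) (t : ℝ) : |jp p t| = |t| ^ (p - 1) := by
  rcases eq_or_ne t 0 with rfl | ht
  · simp [jp, Real.zero_rpow (sub_ne_zero.2 hp)]
  · rw [jp, abs_mul, abs_of_nonneg (by positivity), ← Real.rpow_add_one (abs_ne_zero.2 ht)]
    ring_nf

theorem abs_jp_sub_jp_le {p : ℝ} (hp : 2 ≤ p) {a b M : ℝ} (ha : |a| ≤ M) (hb : |b| ≤ M) :
    |jp p a - jp p b| ≤ (p - 1) * M ^ (p - 2) * |a - b| := by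
  have hderiv : ∀ t ∈ uIcc b a, ‖(p - 1) * |t| ^ (p - 2)‖ ≤ (p - 1) * M ^ (p - 2) := by
    intro t ht
    have htM : |t| ≤ M := by
      rw [abs_le] at ha hb ⊢
      rcases Set.mem_uIcc.1 ht with h | h <;> constructor <;> linarith
    rw [Real.norm_eq_abs, abs_of_nonneg (mul_nonneg (by linarith) (by positivity))]
    gcongr
    linarith
  simpa using Convex.norm_image_sub_le_of_norm_hasDerivWithin_le
    (fun t _ => (hasDerivAt_jp hp t).hasDerivWithinAt) hderiv (convex_uIcc b a)
    left_mem_uIcc right_mem_uIcc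

theorem abs_jp_add_jp_le {p : ℝ} (hp : 2 ≤ p) {a b d L K : ℝ} (hL : 0 ≤ L) (hd : 0 ≤ d)
    (ha : |a| ≤ L * d) (hb : |b| ≤ L * d) (hab : |a + b| ≤ K * d ^ 2) :
    |jp p a + jp p b| ≤ (p - 1) * L ^ (p - 2) * K * d ^ p := by
  have hb' : |-b| ≤ L * d := by rwa [abs_neg]
  have hdp : d ^ (p - 2) * d ^ 2 = d ^ p := by
    rw [← Real.rpow_two, ← Real.rpow_add' hd (by linarith), sub_add_cancel]
  calc |jp p a + jp p b| = |jp p a - jp p (-b)| := by rw [jp_neg, sub_neg_eq_add]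
    _ ≤ (p - 1) * (L * d) ^ (p - 2) * |a - -b| := abs_jp_sub_jp_le hp ha hb'
    _ ≤ (p - 1) * (L * d) ^ (p - 2) * (K * d ^ 2) := by
        rw [sub_neg_eq_add]
        exact mul_le_mul_of_nonneg_left hab (mul_nonneg (by linarith) (by positivity))
    _ = (p - 1) * L ^ (p - 2) * K * d ^ p := by
        rw [Real.mul_rpow hL hd]
        linear_combination (p - 1) * L ^ (p - 2) * K * hdp

theorem dist_reflect {E : Type*} [NormedAddCommGroup E] (x y : E) :
    dist (x + x - y) x = dist y x := by
  rw [dist_eq_norm, dist_eq_norm', add_sub_right_comm, add_sub_cancel_right]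

section Integrability

variable {E : Type*} [NormedAddCommGroup E] [NormedSpace ℝ E] [FiniteDimensional ℝ E]
  [MeasurableSpace E] [BorelSpace E] {μ : Measure E} [μ.IsAddHaarMeasure]

theorem integrableOn_norm_sub_rpow_ball_sdiff {b : ℝ} (hb : -(Module.finrank ℝ E : ℝ) < b)
    (x : E) (r : ℝ) : IntegrableOn (fun y => ‖y - x‖ ^ b) (ball x r \ {x}) μ := by
  rcases (Module.finrank ℝ E).eq_zero_or_pos with hE | hE
  · have : Subsingleton E := Module.finrank_zero_iff.1 hE
    rw [sdiff_eq_empty.2 fun y _ => mem_singleton_iff.2 (Subsingleton.elim y x)]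
    exact integrableOn_empty
  have h0 : IntegrableOn (fun y : E => ‖y‖ ^ b) (ball 0 r) μ :=
    integrableOn_ball_of_norm_le_rpow hE (C := 1) (α := -b) (by linarith)
      (ae_of_all _ fun y => by simp [abs_of_nonneg (Real.rpow_nonneg (norm_nonneg y) b)])
      (measurable_norm.pow_const b).aestronglyMeasurable
  have hshift := ((measurePreserving_sub_right μ x).integrableOn_comp_preimage
    (MeasurableEquiv.subRight x).measurableEmbedding).2 h0
  have hpre : (fun y => y - x) ⁻¹' ball (0 : E) r = ball x r := by
    ext y; simp [dist_eq_norm]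
  rw [hpre] at hshift
  exact hshift.mono_set sdiff_subset

theorem integrableOn_norm_sub_rpow_compl_ball {a ε : ℝ} (ha : (Module.finrank ℝ E : ℝ) < a)
    (hε : 0 < ε) (x : E) : IntegrableOn (fun y => ‖y - x‖ ^ (-a)) (ball x ε)ᶜ μ := by
  have ha0 : 0 ≤ a := (Nat.cast_nonneg _).trans ha.le
  set c := 1 + ε⁻¹
  have hc : 0 < c := by positivity
  have hdom : Integrable (fun y => c ^ a * (1 + ‖y - x‖) ^ (-a)) μ :=
    ((integrable_one_add_norm ha).comp_sub_right x).const_mul _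
  refine hdom.integrableOn.mono'
    ((measurable_id.sub_const x).norm.pow_const _).aestronglyMeasurable (ae_restrict_of_forall_mem
    measurableSet_ball.compl fun y hy => ?_)
  have hεt : ε ≤ ‖y - x‖ := by simpa [dist_eq_norm] using hy
  have ht : 0 < ‖y - x‖ := hε.trans_le hεt
  have hle : 1 + ‖y - x‖ ≤ c * ‖y - x‖ := by
    have : 1 ≤ ε⁻¹ * ‖y - x‖ := by rw [inv_mul_eq_div, one_le_div hε]; exact hεt
    linarith
  calc ‖‖y - x‖ ^ (-a)‖ = c ^ a * (c * ‖y - x‖) ^ (-a) := by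
        rw [Real.norm_of_nonneg (by positivity), Real.mul_rpow hc.le ht.le, Real.rpow_neg hc.le,
          mul_inv_cancel_left₀ (by positivity)]
    _ ≤ c ^ a * (1 + ‖y - x‖) ^ (-a) := by
        refine mul_le_mul_of_nonneg_left ?_ (by positivity)
        exact Real.rpow_le_rpow_of_nonpos (by positivity) hle (by linarith)

end Integrability

section SecondDifference

variable {E : Type*} [NormedAddCommGroup E] [NormedSpace ℝ E]

theorem abs_second_difference_le {u : E → ℝ} {x h : E} {r : ℝ} {K : ℝ≥0}
    (hd : ∀ y ∈ ball x r, DifferentiableAt ℝ u y) (hlip : LipschitzOnWith K (fderiv ℝ u) (ball x r))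
    (hh : ‖h‖ < r) : |u (x + h) + u (x - h) - 2 * u x| ≤ 2 * K * ‖h‖ ^ 2 := by
  have hmem : ∀ t ∈ Icc (0 : ℝ) 1, x + t • h ∈ ball x r ∧ x - t • h ∈ ball x r := by
    intro t ht
    have : ‖t • h‖ < r := by
      rw [norm_smul, Real.norm_of_nonneg ht.1]
      exact (mul_le_of_le_one_left (norm_nonneg h) ht.2).trans_lt hh
    simpa [dist_eq_norm] using this
  set φ : ℝ → ℝ := fun t => u (x + t • h) + u (x - t • h)
  have hφ : ∀ t ∈ Icc (0 : ℝ) 1,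
      HasDerivAt φ (fderiv ℝ u (x + t • h) h - fderiv ℝ u (x - t • h) h) t := by
    intro t ht
    have hplus := (hd _ (hmem t ht).1).hasFDerivAt.comp_hasDerivAt t
      (((hasDerivAt_id t).smul_const h).const_add x)
    have hminus := (hd _ (hmem t ht).2).hasFDerivAt.comp_hasDerivAt t
      (((hasDerivAt_id t).smul_const h).const_sub x)
    refine (hplus.add hminus).congr_deriv ?_
    simp [sub_eq_add_neg]
  have hφ' : ∀ t ∈ Icc (0 : ℝ) 1,
      ‖fderiv ℝ u (x + t • h) h - fderiv ℝ u (x - t • h) h‖ ≤ 2 * K * ‖h‖ ^ 2 := by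
    intro t ht
    rw [← sub_apply]
    calc _ ≤ ‖fderiv ℝ u (x + t • h) - fderiv ℝ u (x - t • h)‖ * ‖h‖ :=
          ContinuousLinearMap.le_opNorm _ h
      _ ≤ K * ‖(x + t • h) - (x - t • h)‖ * ‖h‖ := by
          gcongr
          rw [← dist_eq_norm, ← dist_eq_norm]
          exact hlip.dist_le_mul _ (hmem t ht).1 _ (hmem t ht).2
      _ = 2 * K * t * ‖h‖ ^ 2 := by
          rw [add_sub_sub_cancel, ← two_smul ℝ, smul_smul, norm_smul, Real.norm_of_nonneg
            (by linarith [ht.1])]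
          ring
      _ ≤ 2 * K * ‖h‖ ^ 2 := by
          have := ht.2
          have : 0 ≤ (K : ℝ) * ‖h‖ ^ 2 := by positivity
          nlinarith
  have hmvt := Convex.norm_image_sub_le_of_norm_hasDerivWithin_le
    (fun t ht => (hφ t ht).hasDerivWithinAt) hφ' (convex_Icc 0 1)
    (left_mem_Icc.2 zero_le_one) (right_mem_Icc.2 zero_le_one)
  simpa [φ, two_mul, ← sub_sub] using hmvt

theorem ContDiffAt.eventually_abs_sub_le_and_abs_second_difference_le {u : E → ℝ} {x : E}
    (hu : ContDiffAt ℝ 2 u x) : ∃ L K : ℝ, 0 ≤ L ∧ ∀ᶠ y in 𝓝 x,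
      |u y - u x| ≤ L * ‖y - x‖ ∧ |u y + u (x + x - y) - 2 * u x| ≤ K * ‖y - x‖ ^ 2 := by
  obtain ⟨L, t, ht, hu_lip⟩ := (hu.of_le one_le_two).exists_lipschitzOnWith
  obtain ⟨K, t', ht', hdu_lip⟩ := (hu.fderiv_right (m := 1) le_rfl).exists_lipschitzOnWith
  have hdiff : ∀ᶠ y in 𝓝 x, DifferentiableAt ℝ u y :=
    (hu.eventually (by simp)).mono fun y hy => hy.differentiableAt two_ne_zero
  have hlip : ∀ᶠ y in 𝓝 x, y ∈ t ∧ y ∈ t' := inter_mem ht ht'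
  obtain ⟨r, hr, hball⟩ := Metric.eventually_nhds_iff_ball.1 (hlip.and hdiff)
  refine ⟨L, 2 * K, L.2, Metric.eventually_nhds_iff_ball.2 ⟨r, hr, fun y hy => ⟨?_, ?_⟩⟩⟩
  · simpa [Real.dist_eq, dist_eq_norm] using
      hu_lip.dist_le_mul y (hball y hy).1.1 x (hball x (mem_ball_self hr)).1.1
  · have hyx : ‖y - x‖ < r := by rwa [← dist_eq_norm]
    have := abs_second_difference_le (fun z hz => (hball z hz).2)
      (hdu_lip.mono fun z hz => (hball z hz).1.2) hyx
    simpa [sub_sub_eq_add_sub, add_comm] using this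

end SecondDifference

section Symmetrization

variable {E F : Type*} [NormedAddCommGroup E] [MeasurableSpace E] [BorelSpace E] {μ : Measure E}
  [NormedAddCommGroup F] [NormedSpace ℝ F]

theorem setIntegral_ball_sdiff_ball_eq_half [μ.IsAddLeftInvariant] [μ.IsNegInvariant]
    {f : E → ℝ} {x : E} {r ε : ℝ} (hf : IntegrableOn f (ball x r \ ball x ε) μ) :
    ∫ y in ball x r \ ball x ε, f y ∂μ =
      (∫ y in ball x r \ ball x ε, (f y + f (x + x - y)) ∂μ) / 2 := by
  set A := ball x r \ ball x ε
  have hT := Measure.measurePreserving_sub_left μ (x + x)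
  have hTemb := (MeasurableEquiv.subLeft (x + x)).measurableEmbedding
  have hA : (fun y => x + x - y) ⁻¹' A = A := by
    ext y
    simp only [A, mem_preimage, Set.mem_sdiff, mem_ball, dist_reflect]
  have hfT : IntegrableOn (fun y => f (x + x - y)) A μ := by
    have h := (hT.integrableOn_comp_preimage hTemb).2 hf
    rwa [hA] at h
  have hint : ∫ y in A, f (x + x - y) ∂μ = ∫ y in A, f y ∂μ := by
    simpa only [hA] using hT.setIntegral_preimage_emb hTemb f A
  rw [integral_add hf hfT, hint]
  ring

theorem tendsto_setIntegral_ball_sdiff_ball {g : E → F} {x : E} {r : ℝ}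
    (hg : IntegrableOn g (ball x r \ {x}) μ) :
    Tendsto (fun ε => ∫ y in ball x r \ ball x ε, g y ∂μ) (𝓝[>] 0)
      (𝓝 (∫ y in ball x r \ {x}, g y ∂μ)) := by
  have hset : ∀ ε > (0 : ℝ), (ball x r \ {x}) ∩ (ball x ε)ᶜ = ball x r \ ball x ε := by
    intro ε hε
    ext y
    simp only [mem_inter_iff, Set.mem_sdiff, mem_singleton_iff, mem_compl_iff]
    exact ⟨fun h => ⟨h.1.1, h.2⟩, fun h => ⟨⟨h.1, fun hy => h.2 (hy ▸ mem_ball_self hε)⟩, h.2⟩⟩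
  have hdom : Tendsto (fun ε => ∫ y in ball x r \ {x}, (ball x ε)ᶜ.indicator g y ∂μ) (𝓝[>] 0)
      (𝓝 (∫ y in ball x r \ {x}, g y ∂μ)) := by
    refine tendsto_integral_filter_of_dominated_convergence (fun y => ‖g y‖)
      (Eventually.of_forall fun ε => hg.aestronglyMeasurable.indicator measurableSet_ball.compl)
      (Eventually.of_forall fun ε => Eventually.of_forall fun y => norm_indicator_le_norm_self _ _)
      hg.norm (ae_restrict_of_forall_mem (measurableSet_ball.diff (measurableSet_singleton x))
        fun y hy => tendsto_const_nhds.congr' ?_)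
    filter_upwards [Ioo_mem_nhdsGT (dist_pos.2 hy.2)] with ε hε
    rw [indicator_of_mem (by simpa using hε.2.le)]
  refine hdom.congr' ?_
  filter_upwards [self_mem_nhdsWithin] with ε hε
  rw [setIntegral_indicator measurableSet_ball.compl, hset ε hε]

end Symmetrization

section Kernel

variable {E : Type*} [NormedAddCommGroup E]

/-- The integrand of the regional `(s,p)`-Laplacian, with `q = n + s p`. -/
def regionalKernel (p q : ℝ) (u : E → ℝ) (x y : E) : ℝ :=
  jp p (u x - u y) / ‖x - y‖ ^ q

theorem continuousOn_regionalKernel {p : ℝ} (hp : 2 ≤ p) (q : ℝ) {u : E → ℝ} {Ω : Set E}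
    (hu : ContinuousOn u Ω) (x : E) : ContinuousOn (regionalKernel p q u x) (Ω \ {x}) := by
  have hpos : ∀ y ∈ Ω \ {x}, 0 < ‖x - y‖ := fun y hy =>
    norm_pos_iff.2 (sub_ne_zero.2 (Ne.symm hy.2))
  exact ((continuous_jp hp).comp_continuousOn (continuousOn_const.sub (hu.mono sdiff_subset))).div
    ((continuousOn_const.sub continuousOn_id).norm.rpow_const fun y hy => Or.inl (hpos y hy).ne')
    fun y hy => (Real.rpow_pos_of_pos (hpos y hy) q).ne'

theorem abs_regionalKernel_add_reflect_le {p : ℝ} (hp : 2 ≤ p) (q : ℝ) {u : E → ℝ} {x : E}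
    {r L K : ℝ} (hL0 : 0 ≤ L) (hL : ∀ y ∈ ball x r, |u y - u x| ≤ L * ‖y - x‖)
    (hK : ∀ y ∈ ball x r, |u y + u (x + x - y) - 2 * u x| ≤ K * ‖y - x‖ ^ 2)
    {y : E} (hy : y ∈ ball x r \ {x}) :
    |regionalKernel p q u x y + regionalKernel p q u x (x + x - y)| ≤
      (p - 1) * L ^ (p - 2) * K * ‖y - x‖ ^ (p - q) := by
  have hd : 0 < ‖y - x‖ := norm_pos_iff.2 (sub_ne_zero.2 hy.2)
  have hTball : x + x - y ∈ ball x r := by rw [mem_ball, dist_reflect]; exact hy.1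
  have ha : |u x - u y| ≤ L * ‖y - x‖ := abs_sub_comm (u y) (u x) ▸ hL y hy.1
  have hb : |u x - u (x + x - y)| ≤ L * ‖y - x‖ := by
    have h := hL _ hTball
    rwa [abs_sub_comm, ← dist_eq_norm, dist_reflect, dist_eq_norm] at h
  have hab : |(u x - u y) + (u x - u (x + x - y))| ≤ K * ‖y - x‖ ^ 2 := by
    rw [← abs_neg]; convert hK y hy.1 using 2; ring
  have hnorm : ‖x - (x + x - y)‖ = ‖y - x‖ := by
    rw [← dist_eq_norm, dist_comm, dist_reflect, dist_eq_norm]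
  rw [regionalKernel, regionalKernel, norm_sub_rev x y, hnorm, ← add_div, abs_div,
    abs_of_pos (Real.rpow_pos_of_pos hd q), div_le_iff₀ (Real.rpow_pos_of_pos hd q), mul_assoc,
    ← Real.rpow_add hd, sub_add_cancel]
  exact abs_jp_add_jp_le hp hL0 hd.le ha hb hab

end Kernel

section KernelIntegrability

variable {E : Type*} [NormedAddCommGroup E] [NormedSpace ℝ E] [FiniteDimensional ℝ E]
  [MeasurableSpace E] [BorelSpace E] {μ : Measure E} [μ.IsAddHaarMeasure]

theorem integrableOn_regionalKernel_sdiff_ball {p q M ε : ℝ} (hp : 2 ≤ p)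
    (hq : (Module.finrank ℝ E : ℝ) < q) {u : E → ℝ} {Ω : Set E} (hΩ : MeasurableSet Ω)
    (hu : ContinuousOn u Ω) (hM : ∀ y ∈ Ω, |u y| ≤ M) {x : E} (hx : x ∈ Ω) (hε : 0 < ε) :
    IntegrableOn (regionalKernel p q u x) (Ω \ ball x ε) μ := by
  have hmeas : MeasurableSet (Ω \ ball x ε) := hΩ.diff measurableSet_ball
  have hcont : ContinuousOn (regionalKernel p q u x) (Ω \ ball x ε) :=
    (continuousOn_regionalKernel hp q hu x).mono fun y hy =>
      ⟨hy.1, fun h => hy.2 (h ▸ mem_ball_self hε)⟩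
  have hdom : IntegrableOn (fun y => (2 * M) ^ (p - 1) * ‖y - x‖ ^ (-q)) (Ω \ ball x ε) μ :=
    IntegrableOn.mono_set ((integrableOn_norm_sub_rpow_compl_ball hq hε x).const_mul _)
      fun y hy => hy.2
  refine hdom.mono' (hcont.aestronglyMeasurable hmeas)
    (ae_restrict_of_forall_mem hmeas fun y hy => ?_)
  have hd : 0 < ‖y - x‖ := hε.trans_le (by simpa [dist_eq_norm] using hy.2)
  rw [Real.norm_eq_abs, regionalKernel, abs_div, abs_jp (by linarith),
    abs_of_pos (Real.rpow_pos_of_pos (norm_sub_rev x y ▸ hd) q), div_eq_mul_inv,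
    ← Real.rpow_neg (norm_nonneg _), norm_sub_rev]
  refine mul_le_mul_of_nonneg_right ?_ (by positivity)
  refine Real.rpow_le_rpow (abs_nonneg _) ?_ (by linarith)
  calc |u x - u y| ≤ |u x| + |u y| := abs_sub _ _
    _ ≤ 2 * M := by linarith [hM x hx, hM y hy.1]

theorem integrableOn_regionalKernel_add_reflect {p q r L K : ℝ} (hp : 2 ≤ p)
    (hq : q < Module.finrank ℝ E + p) {u : E → ℝ} {x : E} (hu : ContinuousOn u (ball x r))
    (hL0 : 0 ≤ L) (hL : ∀ y ∈ ball x r, |u y - u x| ≤ L * ‖y - x‖)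
    (hK : ∀ y ∈ ball x r, |u y + u (x + x - y) - 2 * u x| ≤ K * ‖y - x‖ ^ 2) :
    IntegrableOn (fun y => regionalKernel p q u x y + regionalKernel p q u x (x + x - y))
      (ball x r \ {x}) μ := by
  have hmeas : MeasurableSet (ball x r \ {x}) := measurableSet_ball.diff (measurableSet_singleton x)
  have hcont := continuousOn_regionalKernel hp q hu x
  have hmaps : MapsTo (fun y => x + x - y) (ball x r \ {x}) (ball x r \ {x}) := fun y hy =>
    ⟨by rw [mem_ball, dist_reflect]; exact hy.1,
      fun h => hy.2 (dist_le_zero.1 (by rw [← dist_reflect, show x + x - y = x from h, dist_self]))⟩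
  exact ((integrableOn_norm_sub_rpow_ball_sdiff (b := p - q) (by linarith) x r).const_mul _).mono'
    ((hcont.add (hcont.comp (continuousOn_const.sub continuousOn_id) hmaps)).aestronglyMeasurable
      hmeas)
    (ae_restrict_of_forall_mem hmeas fun y hy => abs_regionalKernel_add_reflect_le hp q hL0 hL hK hy)

end KernelIntegrability

theorem setIntegral_sdiff_eq_sdiff_add_sdiff {α : Type*} [MeasurableSpace α] {μ : Measure α}
    {f : α → ℝ} {s t v : Set α} (hvt : v ⊆ t) (hts : t ⊆ s) (ht : MeasurableSet t)
    (hf : IntegrableOn f (s \ v) μ) :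
    ∫ y in s \ v, f y ∂μ = ∫ y in s \ t, f y ∂μ + ∫ y in t \ v, f y ∂μ := by
  have h₁ : (s \ v) ∩ t = t \ v := by
    ext y; constructor
    · exact fun h => ⟨h.2, h.1.2⟩
    · exact fun h => ⟨⟨hts h.1, h.2⟩, h.1⟩
  have h₂ : (s \ v) \ t = s \ t := by
    ext y; constructor
    · exact fun h => ⟨h.1.1, h.2⟩
    · exact fun h => ⟨⟨h.1, fun hv => h.2 (hvt hv)⟩, h.2⟩
  rw [← integral_inter_add_sdiff ht hf, h₁, h₂, add_comm]

/-- The regional `(s,p)`-Laplacian is well defined at every point of `Ω` for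
`u ∈ C²(Ω) ∩ L^∞(Ω)` and `2 ≤ p < ∞`. -/
theorem regional_pLaplacian_well_defined
    (n : ℕ) (s p : ℝ) (hs0 : 0 < s) (hs1 : s < 1) (hp : 2 ≤ p)
    (Ω : Set (Euc n)) (hΩ : IsOpen Ω)
    (u : Euc n → ℝ) (hu : ContDiffOn ℝ 2 u Ω) (hub : ∃ M : ℝ, ∀ x ∈ Ω, |u x| ≤ M)
    (x : Euc n) (hx : x ∈ Ω) :
    (∀ ε > (0:ℝ), IntegrableOn
        (fun y => |u x - u y| ^ (p - 2) * (u x - u y) / ‖x - y‖ ^ ((n : ℝ) + s * p))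
        (Ω \ Metric.ball x ε) volume) ∧
    ∃ L : ℝ, Tendsto
      (fun ε : ℝ => ∫ y in Ω \ Metric.ball x ε,
        |u x - u y| ^ (p - 2) * (u x - u y) / ‖x - y‖ ^ ((n : ℝ) + s * p))
      (𝓝[>] (0:ℝ)) (𝓝 L) := by
  show (∀ ε > (0 : ℝ), IntegrableOn (regionalKernel p (n + s * p) u x) (Ω \ ball x ε) volume) ∧
    ∃ L, Tendsto (fun ε => ∫ y in Ω \ ball x ε, regionalKernel p (n + s * p) u x y)
      (𝓝[>] 0) (𝓝 L)
  have hdim : (Module.finrank ℝ (Euc n) : ℝ) = n := by rw [finrank_euclideanSpace_fin]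
  have hsp : 0 < s * p := mul_pos hs0 (by linarith)
  have hsp' : s * p < p := by nlinarith
  obtain ⟨M, hM⟩ := hub
  have hfar : ∀ ε > (0 : ℝ), IntegrableOn (regionalKernel p (n + s * p) u x) (Ω \ ball x ε) :=
    fun ε hε => integrableOn_regionalKernel_sdiff_ball hp (by linarith) hΩ.measurableSet
      hu.continuousOn hM hx hε
  refine ⟨hfar, ?_⟩
  obtain ⟨L, K, hL0, hLK⟩ :=
    (hu.contDiffAt (hΩ.mem_nhds hx)).eventually_abs_sub_le_and_abs_second_difference_le
  obtain ⟨r, hr, hball⟩ := Metric.eventually_nhds_iff_ball.1 (hLK.and (hΩ.mem_nhds hx))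
  have hrΩ : ball x r ⊆ Ω := fun y hy => (hball y hy).2
  have hnear := integrableOn_regionalKernel_add_reflect (μ := volume) (q := n + s * p) hp
    (by linarith) (hu.continuousOn.mono hrΩ) hL0 (fun y hy => (hball y hy).1.1)
    (fun y hy => (hball y hy).1.2)
  refine ⟨_, (((tendsto_setIntegral_ball_sdiff_ball hnear).div_const 2).const_add
    (∫ y in Ω \ ball x r, regionalKernel p (n + s * p) u x y)).congr' ?_⟩
  filter_upwards [Ioo_mem_nhdsGT hr] with ε hε
  rw [setIntegral_sdiff_eq_sdiff_add_sdiff (ball_subset_ball hε.2.le) hrΩ measurableSet_ball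
    (hfar ε hε.1), setIntegral_ball_sdiff_ball_eq_half
    ((hfar ε hε.1).mono_set (sdiff_subset_sdiff_left hrΩ))]
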